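/- arXiv:2604.11100 — 13 statements merged into one kernel-verified Lean document; each statement's English description precedes it below -/
import Mathlib

section
/- For every s ≥ 0 there exists a unique μ > 0 satisfying the fixed-point equation μ = exp(((α/α̃ − 1)²·s²/(α·σ²·μ + s)² − 1)·ν²·T/(2·σ²)). (Existence and uniqueness of the integral parameter in equation (8), with s playing the role of η − u(q(η)).) -/
/-!
The right-hand side `F μ` of the fixed-point equation is antitone and continuous in `μ > 0`, and
bounded below by `a := exp (-ν² T / (2σ²)) > 0`. An antitone map has at most one fixed point,
and on `[a, F a]` the continuous map `F` starts above the diagonal (`a ≤ F a`) and ends below it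
(`F (F a) ≤ F a`), so it crosses the diagonal there.
-/

open Set Function

theorem AntitoneOn.eq_of_isFixedPt {α : Type*} [LinearOrder α] {f : α → α} {s : Set α}
    (hf : AntitoneOn f s) {x y : α} (hx : x ∈ s) (hy : y ∈ s) (hfx : IsFixedPt f x)
    (hfy : IsFixedPt f y) : x = y := by
  rcases le_total x y with hxy | hyx
  · exact hxy.antisymm (hfy ▸ hfx ▸ hf hx hy hxy)
  · exact (hfx ▸ hfy ▸ hf hy hx hyx).antisymm hyx

theorem AntitoneOn.exists_isFixedPt_Icc {α : Type*} [ConditionallyCompleteLinearOrder α]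
    [TopologicalSpace α] [OrderTopology α] [DenselyOrdered α] {f : α → α} {a : α}
    (hf : AntitoneOn f (Icc a (f a))) (hcont : ContinuousOn f (Icc a (f a))) (ha : a ≤ f a) :
    ∃ x ∈ Icc a (f a), IsFixedPt f x := by
  obtain ⟨x, hx, hfx⟩ := isPreconnected_Icc.intermediate_value₂ (left_mem_Icc.2 ha)
    (right_mem_Icc.2 ha) continuousOn_id hcont ha (hf (left_mem_Icc.2 ha) (right_mem_Icc.2 ha) ha)
  exact ⟨x, hx, hfx.symm⟩

noncomputable def integralParameterMap (ν σ T αl α s μ : ℝ) : ℝ :=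
  Real.exp (((α / αl - 1) ^ 2 * s ^ 2 / (α * σ ^ 2 * μ + s) ^ 2 - 1) * ν ^ 2 * T / (2 * σ ^ 2))

section IntegralParameterMap

variable {ν σ T αl α s : ℝ}

theorem exp_le_integralParameterMap (hT : 0 ≤ T) (μ : ℝ) :
    Real.exp (-(ν ^ 2 * T / (2 * σ ^ 2))) ≤ integralParameterMap ν σ T αl α s μ := by
  rw [integralParameterMap, show -(ν ^ 2 * T / (2 * σ ^ 2)) = (0 - 1) * ν ^ 2 * T / (2 * σ ^ 2) by
    ring]
  gcongr
  positivity

theorem integralParameterMap_antitoneOn (hσ : σ ≠ 0) (hα : 0 < α) (hs : 0 ≤ s) (hT : 0 ≤ T) :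
    AntitoneOn (integralParameterMap ν σ T αl α s) (Ioi 0) := by
  intro x hx y hy hxy
  unfold integralParameterMap
  have : 0 < α * σ ^ 2 * x + s := by have := hx.out; positivity
  gcongr

theorem continuousOn_integralParameterMap (hσ : σ ≠ 0) (hα : 0 < α) (hs : 0 ≤ s) :
    ContinuousOn (integralParameterMap ν σ T αl α s) (Ioi 0) := by
  refine Real.continuous_exp.comp_continuousOn (ContinuousOn.div_const ?_ _)
  refine ContinuousOn.mul (ContinuousOn.mul ?_ continuousOn_const) continuousOn_const
  refine (continuousOn_const.div (by fun_prop) fun μ hμ => ?_).sub continuousOn_const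
  have := hμ.out
  positivity

end IntegralParameterMap

theorem exists_unique_integral_parameter_general
    (ν σ T αl α : ℝ) (hσ : 0 < σ) (hT : 0 < T)
    (hα : 0 < α) (s : ℝ) (hs : 0 ≤ s) :
    ∃! μ : ℝ, 0 < μ ∧
      μ = Real.exp (((α / αl - 1) ^ 2 * s ^ 2 / (α * σ ^ 2 * μ + s) ^ 2 - 1)
        * ν ^ 2 * T / (2 * σ ^ 2)) := by
  set F := integralParameterMap ν σ T αl α s
  set a := Real.exp (-(ν ^ 2 * T / (2 * σ ^ 2)))
  have hanti : AntitoneOn F (Ioi 0) := integralParameterMap_antitoneOn hσ.ne' hα hs hT.le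
  have hcont : ContinuousOn F (Ioi 0) := continuousOn_integralParameterMap hσ.ne' hα hs
  have hIcc : Icc a (F a) ⊆ Ioi 0 := fun x hx => (Real.exp_pos _).trans_le hx.1
  obtain ⟨μ, hμ, hfix⟩ := (hanti.mono hIcc).exists_isFixedPt_Icc (hcont.mono hIcc)
    (exp_le_integralParameterMap hT.le a)
  exact ⟨μ, ⟨hIcc hμ, hfix.symm⟩, fun y ⟨hy, hfy⟩ =>
    hanti.eq_of_isFixedPt hy (hIcc hμ) hfy.symm hfix⟩

/-- Existence and uniqueness of the integral parameter in equation (8). -/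
theorem exists_unique_integral_parameter
    (ν σ T αl α : ℝ) (hν : 0 < ν) (hσ : 0 < σ) (hT : 0 < T)
    (hαl : 0 < αl) (hα : 0 < α) (s : ℝ) (hs : 0 ≤ s) :
    ∃! μ : ℝ, 0 < μ ∧
      μ = Real.exp (((α / αl - 1) ^ 2 * s ^ 2 / (α * σ ^ 2 * μ + s) ^ 2 - 1)
        * ν ^ 2 * T / (2 * σ ^ 2)) :=
  exists_unique_integral_parameter_general ν σ T αl α hσ hT hα s hs
end

section
/- (Implicit differentiation formula, equation (24).) Let η > 0, let u₀ ∈ [0, η), and let μ : ℝ → ℝ be differentiable at u₀, with μ(u) > 0 and μ(u) = exp(((α/α̃ − 1)²·(η − u)²/(α·σ²·μ(u) + η − u)² − 1)·ν²·T/(2·σ²)) for all u in some neighborhood of u₀. Then the derivative of μ at u₀ equals −A/(1 + B), where A = (α/α̃ − 1)²·μ(u₀)·(2·α·σ²·μ(u₀)·(η − u₀)/(α·σ²·μ(u₀) + η − u₀)³)·(ν²·T/(2·σ²)) and B = (α/α̃ − 1)²·μ(u₀)·(2·α·σ²·(η − u₀)²/(α·σ²·μ(u₀) + η − u₀)³)·(ν²·T/(2·σ²)).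 -/
/-!
Writing `s = η - u`, `a = α σ²` and `D = a μ + s`, the fixed-point equation reads
`μ = exp ((k s² / D² - 1) c)` with `k = (α/α̃ - 1)²` and `c = ν² T / (2 σ²)`.
Since `d/du (s / D) = -a (μ + s μ') / D²`, the chain rule gives the linear equation
`μ' = -A - B μ'` for the derivative, and `1 + B > 0` because `D > 0`, `T > 0` and `α > 0`.
-/

open Filter Topology

theorem eq_neg_div_of_eq_neg_sub_mul {K : Type*} [Field K] {d A B : K}
    (h : d = -A - B * d) (hB : 1 + B ≠ 0) : d = -A / (1 + B) := by
  rw [eq_div_iff hB]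
  linear_combination h

theorem HasDerivAt.sub_sq_div_add_sq {m : ℝ → ℝ} {m' a η x : ℝ} (hm : HasDerivAt m m' x)
    (hD : a * m x + (η - x) ≠ 0) :
    HasDerivAt (fun u => (η - u) ^ 2 / (a * m u + (η - u)) ^ 2)
      (-(2 * a * (η - x) * (m x + (η - x) * m') / (a * m x + (η - x)) ^ 3)) x := by
  have hs : HasDerivAt (fun u => η - u) (-1) x := by
    simpa using (hasDerivAt_id x).const_sub η
  have hD' := (hm.const_mul a).fun_add hs
  refine ((hs.fun_pow 2).fun_div (hD'.fun_pow 2) (pow_ne_zero 2 hD)).congr_deriv ?_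
  field_simp
  ring

theorem HasDerivAt.of_eventuallyEq_exp {f r : ℝ → ℝ} {r' k c x : ℝ} (hr : HasDerivAt r r' x)
    (hf : f =ᶠ[𝓝 x] fun u => Real.exp ((k * r u - 1) * c)) :
    HasDerivAt f (f x * (k * r' * c)) x := by
  rw [hf.eq_of_nhds]
  exact ((((hr.const_mul k).sub_const 1).mul_const c).exp).congr_of_eventuallyEq hf

theorem integral_parameter_deriv_general
    (ν σ T αl α : ℝ) (hT : 0 < T)
    (hα : 0 < α)
    (η u₀ : ℝ) (hu₀η : u₀ < η)
    (μ : ℝ → ℝ) (hdiff : DifferentiableAt ℝ μ u₀)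
    (hfix : ∀ᶠ u in nhds u₀, 0 < μ u ∧
      μ u = Real.exp (((α / αl - 1) ^ 2 * (η - u) ^ 2
        / (α * σ ^ 2 * μ u + (η - u)) ^ 2 - 1) * ν ^ 2 * T / (2 * σ ^ 2))) :
    deriv μ u₀ =
      -((α / αl - 1) ^ 2 * μ u₀ *
          (2 * α * σ ^ 2 * μ u₀ * (η - u₀) / (α * σ ^ 2 * μ u₀ + (η - u₀)) ^ 3)
          * (ν ^ 2 * T / (2 * σ ^ 2))) /
        (1 + (α / αl - 1) ^ 2 * μ u₀ *
          (2 * α * σ ^ 2 * (η - u₀) ^ 2 / (α * σ ^ 2 * μ u₀ + (η - u₀)) ^ 3)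
          * (ν ^ 2 * T / (2 * σ ^ 2))) := by
  have hμ₀ : 0 < μ u₀ := hfix.self_of_nhds.1
  have hs : 0 < η - u₀ := sub_pos.mpr hu₀η
  have hD : 0 < α * σ ^ 2 * μ u₀ + (η - u₀) := by positivity
  have hμ : HasDerivAt μ _ u₀ :=
    (hdiff.hasDerivAt.sub_sq_div_add_sq hD.ne').of_eventuallyEq_exp (k := (α / αl - 1) ^ 2)
      (c := ν ^ 2 * T / (2 * σ ^ 2)) <| hfix.mono fun u hu => by
        rw [hu.2]
        ring_nf
  apply eq_neg_div_of_eq_neg_sub_mul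
  · exact hμ.deriv.trans (by ring)
  · positivity

/-- Implicit differentiation formula, equation (24). -/
theorem integral_parameter_deriv
    (ν σ T αl α : ℝ) (hν : 0 < ν) (hσ : 0 < σ) (hT : 0 < T)
    (hαl : 0 < αl) (hα : 0 < α)
    (η u₀ : ℝ) (hη : 0 < η) (hu₀ : 0 ≤ u₀) (hu₀η : u₀ < η)
    (μ : ℝ → ℝ) (hdiff : DifferentiableAt ℝ μ u₀)
    (hfix : ∀ᶠ u in nhds u₀, 0 < μ u ∧
      μ u = Real.exp (((α / αl - 1) ^ 2 * (η - u) ^ 2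
        / (α * σ ^ 2 * μ u + (η - u)) ^ 2 - 1) * ν ^ 2 * T / (2 * σ ^ 2))) :
    deriv μ u₀ =
      -((α / αl - 1) ^ 2 * μ u₀ *
          (2 * α * σ ^ 2 * μ u₀ * (η - u₀) / (α * σ ^ 2 * μ u₀ + (η - u₀)) ^ 3)
          * (ν ^ 2 * T / (2 * σ ^ 2))) /
        (1 + (α / αl - 1) ^ 2 * μ u₀ *
          (2 * α * σ ^ 2 * (η - u₀) ^ 2 / (α * σ ^ 2 * μ u₀ + (η - u₀)) ^ 3)
          * (ν ^ 2 * T / (2 * σ ^ 2))) :=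
  integral_parameter_deriv_general ν σ T αl α hT hα η u₀ hu₀η μ hdiff hfix
end

section
/- Let η > 0, let u₀ ∈ [0, η), and let μ : ℝ → ℝ be differentiable at u₀, with μ(u) > 0 and μ(u) = exp(((α/α̃ − 1)²·(η − u)²/(α·σ²·μ(u) + η − u)² − 1)·ν²·T/(2·σ²)) for all u in some neighborhood of u₀. If α ≠ α̃, then the derivative of μ at u₀ is strictly negative; that is, the integral parameter is strictly decreasing in the policy utility. -/
/-!
With `s = η - u` and `r = s / (α σ² μ + s)`, the fixed-point equation reads
`μ = exp ((c r² - 1) K)` with `c = (α/α̃ - 1)² > 0` and `K = ν² T / (2σ²) > 0`.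
Since `r' = -α σ² (μ + s μ') / (α σ² μ + s)²`, differentiating gives `μ' = -A (μ + s μ')` with
`A > 0`, i.e. `μ' (1 + A s) = -A μ < 0`.
-/

open Real Filter Topology

theorem HasDerivAt.sub_div_mul_add_sub {f : ℝ → ℝ} {f' x : ℝ} (a k : ℝ) (hf : HasDerivAt f f' x)
    (hD : k * f x + (a - x) ≠ 0) :
    HasDerivAt (fun u => (a - u) / (k * f u + (a - u)))
      (-(k * (f x + (a - x) * f')) / (k * f x + (a - x)) ^ 2) x := by
  have hsub : HasDerivAt (fun u : ℝ => a - u) (-1) x := by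
    simpa using (hasDerivAt_id x).const_sub a
  exact (hsub.fun_div ((hf.const_mul k).fun_add hsub) hD).congr_deriv (by ring)

theorem neg_of_eq_neg_mul_add_mul {d A m s : ℝ} (h : d = -(A * (m + s * d)))
    (hA : 0 < A) (hm : 0 < m) (hs : 0 ≤ s) : d < 0 := by
  by_contra! hd
  nlinarith [mul_nonneg (mul_nonneg hA.le hs) hd, mul_pos hA hm]

theorem sq_div_sub_one_pos {a b : ℝ} (h : a ≠ b) : 0 < (a / b - 1) ^ 2 := by
  have hab : a / b ≠ 1 := fun hab => h <| by
    rcases eq_or_ne b 0 with hb | hb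
    · simp [hb] at hab
    · exact (div_eq_one_iff_eq hb).mp hab
  exact pow_two_pos_of_ne_zero (sub_ne_zero.mpr hab)

theorem integral_parameter_deriv_neg_general
    (ν σ T αl α : ℝ) (hν : 0 < ν) (hσ : 0 < σ) (hT : 0 < T)
    (hα : 0 < α)
    (η u₀ : ℝ) (hu₀η : u₀ < η)
    (μ : ℝ → ℝ) (hdiff : DifferentiableAt ℝ μ u₀)
    (hfix : ∀ᶠ u in nhds u₀, 0 < μ u ∧
      μ u = Real.exp (((α / αl - 1) ^ 2 * (η - u) ^ 2
        / (α * σ ^ 2 * μ u + (η - u)) ^ 2 - 1) * ν ^ 2 * T / (2 * σ ^ 2)))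
    (hne : α ≠ αl) :
    deriv μ u₀ < 0 := by
  have hm : 0 < μ u₀ := hfix.self_of_nhds.1
  have hs : 0 < η - u₀ := sub_pos.mpr hu₀η
  have hD : 0 < α * σ ^ 2 * μ u₀ + (η - u₀) := by positivity
  have hc := sq_div_sub_one_pos hne
  have hμ : μ =ᶠ[𝓝 u₀] fun u => exp (((α / αl - 1) ^ 2
      * ((η - u) / (α * σ ^ 2 * μ u + (η - u))) ^ 2 - 1) * ν ^ 2 * T / (2 * σ ^ 2)) :=
    hfix.mono fun u h => h.2.trans (by simp only [div_pow, mul_div_assoc])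
  have hr := hdiff.hasDerivAt.sub_div_mul_add_sub η (α * σ ^ 2) hD.ne'
  have hg := ((((hr.fun_pow 2).const_mul ((α / αl - 1) ^ 2)).sub_const 1).mul_const (ν ^ 2)
    |>.mul_const T |>.div_const (2 * σ ^ 2)).exp
  have hderiv := (hg.congr_of_eventuallyEq hμ).unique hdiff.hasDerivAt
  have hμ₀ := hμ.self_of_nhds
  beta_reduce at hμ₀
  rw [← hμ₀] at hderiv
  -- abstracting the denominator lets `ring` combine the powers of `D⁻¹`
  set D := α * σ ^ 2 * μ u₀ + (η - u₀)
  clear_value D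
  simp only [Nat.cast_ofNat, Nat.add_one_sub_one, pow_one] at hderiv
  refine neg_of_eq_neg_mul_add_mul (m := μ u₀) (s := η - u₀) (A := 2 * μ u₀ * (α / αl - 1) ^ 2
    * (ν ^ 2 * T / (2 * σ ^ 2)) * (α * σ ^ 2) * (η - u₀) / D ^ 3) ?_ (by positivity) hm hs.le
  linear_combination -hderiv

/-- The integral parameter is strictly decreasing in the policy utility. -/
theorem integral_parameter_deriv_neg
    (ν σ T αl α : ℝ) (hν : 0 < ν) (hσ : 0 < σ) (hT : 0 < T)
    (hαl : 0 < αl) (hα : 0 < α)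
    (η u₀ : ℝ) (hη : 0 < η) (hu₀ : 0 ≤ u₀) (hu₀η : u₀ < η)
    (μ : ℝ → ℝ) (hdiff : DifferentiableAt ℝ μ u₀)
    (hfix : ∀ᶠ u in nhds u₀, 0 < μ u ∧
      μ u = Real.exp (((α / αl - 1) ^ 2 * (η - u) ^ 2
        / (α * σ ^ 2 * μ u + (η - u)) ^ 2 - 1) * ν ^ 2 * T / (2 * σ ^ 2)))
    (hne : α ≠ αl) :
    deriv μ u₀ < 0 :=
  integral_parameter_deriv_neg_general ν σ T αl α hν hσ hT hα η u₀ hu₀η μ hdiff hfix hne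
end

section
/- For every s > 0 there exists a unique z > 0 satisfying s·z = exp(((α/α̃ − 1)²/(α·σ²·z + 1)² − 1)·ν²·T/(2·σ²)). (Existence and uniqueness of the rescaled integral parameter z(s) = μ(s)/s.) -/
open Set

/-- Since `z ↦ s * z - φ z` is strictly increasing on `[0, ∞)`, negative at `0` and nonnegative
at `φ 0 / s`, the intermediate value theorem gives exactly one zero. -/
theorem existsUnique_pos_mul_eq_of_antitoneOn {φ : ℝ → ℝ} {s : ℝ} (hs : 0 < s)
    (hcont : ContinuousOn φ (Ici 0)) (hanti : AntitoneOn φ (Ici 0)) (hφ0 : 0 < φ 0) :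
    ∃! z : ℝ, 0 < z ∧ s * z = φ z := by
  set F : ℝ → ℝ := fun z => s * z - φ z
  have hF_mono : StrictMonoOn F (Ici 0) := fun x hx y hy hxy => by
    have hφ := hanti hx hy hxy.le
    simp only [F]
    nlinarith
  have hF0 : F 0 < 0 := by simpa [F] using hφ0
  set M := φ 0 / s
  have hM : 0 ≤ M := by positivity
  have hFM : 0 ≤ F M := by
    have hφM := hanti self_mem_Ici hM hM
    simp only [F, M, mul_div_cancel₀ _ hs.ne']
    linarith
  obtain ⟨z, hz, hFz⟩ := intermediate_value_Icc hM
    ((continuousOn_const.mul continuousOn_id).sub hcont |>.mono Icc_subset_Ici_self)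
    ⟨hF0.le, hFM⟩
  change F z = 0 at hFz
  have hz0 : 0 < z := hz.1.lt_of_ne (by rintro rfl; exact hF0.ne hFz)
  refine ⟨z, ⟨hz0, sub_eq_zero.1 hFz⟩, fun w ⟨hw0, hw⟩ => ?_⟩
  exact hF_mono.injOn hw0.le hz.1 (by simp only [F, hw, sub_self, hFz])

theorem exists_unique_rescaled_parameter_general
    (ν σ T αl α : ℝ) (hT : 0 < T) (hα : 0 < α) (s : ℝ) (hs : 0 < s) :
    ∃! z : ℝ, 0 < z ∧
      s * z = Real.exp (((α / αl - 1) ^ 2 / (α * σ ^ 2 * z + 1) ^ 2 - 1)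
        * ν ^ 2 * T / (2 * σ ^ 2)) := by
  have hden : ∀ z ∈ Ici (0 : ℝ), 0 < α * σ ^ 2 * z + 1 := fun z hz => by
    have : 0 ≤ α * σ ^ 2 * z := by positivity [mem_Ici.1 hz]
    linarith
  refine existsUnique_pos_mul_eq_of_antitoneOn hs ?_ ?_ (Real.exp_pos _)
  · exact ContinuousOn.rexp (by fun_prop (disch := intro z hz; exact (pow_pos (hden z hz) 2).ne'))
  · intro x hx y hy hxy
    have hx_den := hden x hx
    dsimp only
    gcongr

/-- Existence and uniqueness of the rescaled integral parameter z(s) = μ(s)/s. -/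
theorem exists_unique_rescaled_parameter
    (ν σ T αl α : ℝ) (hν : 0 < ν) (hσ : 0 < σ) (hT : 0 < T)
    (hαl : 0 < αl) (hα : 0 < α) (s : ℝ) (hs : 0 < s) :
    ∃! z : ℝ, 0 < z ∧
      s * z = Real.exp (((α / αl - 1) ^ 2 / (α * σ ^ 2 * z + 1) ^ 2 - 1)
        * ν ^ 2 * T / (2 * σ ^ 2)) :=
  exists_unique_rescaled_parameter_general ν σ T αl α hT hα s hs
end

section
/- Let 0 < s₁ < s₂ and let z₁ > 0 and z₂ > 0 be the unique solutions of s·z = exp(((α/α̃ − 1)²/(α·σ²·z + 1)² − 1)·ν²·T/(2·σ²)) for s = s₁ and s = s₂ respectively. Then z₁ > z₂; that is, the rescaled integral parameter z(s) is strictly decreasing in the effective herd coefficient s (equivalently, strictly increasing in the policy utility u = η − s). -/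
/-!
The right-hand side `g z` of the fixed-point equation is antitone in `z ≥ 0`, because
`(α/α̃ - 1)² / (ασ²z + 1)²` decreases in `z`. If we had `z₁ ≤ z₂`, then
`s₂ z₂ = g z₂ ≤ g z₁ = s₁ z₁ ≤ s₁ z₂ < s₂ z₂`.
-/

open Real Set

theorem lt_of_mul_eq_of_antitoneOn {g : ℝ → ℝ} {S : Set ℝ} (hg : AntitoneOn g S)
    {s₁ s₂ z₁ z₂ : ℝ} (hs₁ : 0 ≤ s₁) (hs : s₁ < s₂) (hz₁ : z₁ ∈ S) (hz₂S : z₂ ∈ S)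
    (hz₂ : 0 < z₂) (h₁ : s₁ * z₁ = g z₁) (h₂ : s₂ * z₂ = g z₂) : z₂ < z₁ := by
  by_contra! h
  have := calc
    s₂ * z₂ = g z₂ := h₂
    _ ≤ g z₁ := hg hz₁ hz₂S h
    _ = s₁ * z₁ := h₁.symm
    _ ≤ s₁ * z₂ := mul_le_mul_of_nonneg_left h hs₁
    _ < s₂ * z₂ := mul_lt_mul_of_pos_right hs hz₂
  exact this.false

theorem antitoneOn_div_sq_mul_add_one {a c : ℝ} (ha : 0 ≤ a) (hc : 0 ≤ c) :
    AntitoneOn (fun z => c / (a * z + 1) ^ 2) (Ici 0) := by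
  intro x (hx : 0 ≤ x) y _ hxy
  dsimp only
  gcongr

theorem AntitoneOn.exp_mul_const {f : ℝ → ℝ} {S : Set ℝ} (hf : AntitoneOn f S) {K : ℝ}
    (hK : 0 ≤ K) : AntitoneOn (fun z => exp (f z * K)) S :=
  fun _ hx _ hy hxy => exp_le_exp.mpr (mul_le_mul_of_nonneg_right (hf hx hy hxy) hK)

theorem rescaled_parameter_strict_anti_general
    (ν σ T αl α : ℝ) (hT : 0 < T)
    (hα : 0 < α)
    (s₁ s₂ z₁ z₂ : ℝ) (hs₁ : 0 < s₁) (hs : s₁ < s₂)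
    (hz₁ : 0 < z₁) (hz₂ : 0 < z₂)
    (hfix₁ : s₁ * z₁ = Real.exp (((α / αl - 1) ^ 2 / (α * σ ^ 2 * z₁ + 1) ^ 2 - 1)
      * ν ^ 2 * T / (2 * σ ^ 2)))
    (hfix₂ : s₂ * z₂ = Real.exp (((α / αl - 1) ^ 2 / (α * σ ^ 2 * z₂ + 1) ^ 2 - 1)
      * ν ^ 2 * T / (2 * σ ^ 2))) :
    z₂ < z₁ := by
  have hquot := antitoneOn_div_sq_mul_add_one (a := α * σ ^ 2) (by positivity)
    (sq_nonneg (α / αl - 1))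
  have hg := (hquot.add_const (-1)).exp_mul_const (K := ν ^ 2 * T / (2 * σ ^ 2)) (by positivity)
  simp only [← sub_eq_add_neg, ← mul_div_assoc, ← mul_assoc] at hg
  exact lt_of_mul_eq_of_antitoneOn hg hs₁.le hs (mem_Ici.mpr hz₁.le) (mem_Ici.mpr hz₂.le) hz₂
    hfix₁ hfix₂

/-- The rescaled integral parameter is strictly decreasing in the effective herd coefficient. -/
theorem rescaled_parameter_strict_anti
    (ν σ T αl α : ℝ) (hν : 0 < ν) (hσ : 0 < σ) (hT : 0 < T)
    (hαl : 0 < αl) (hα : 0 < α)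
    (s₁ s₂ z₁ z₂ : ℝ) (hs₁ : 0 < s₁) (hs : s₁ < s₂)
    (hz₁ : 0 < z₁) (hz₂ : 0 < z₂)
    (hfix₁ : s₁ * z₁ = Real.exp (((α / αl - 1) ^ 2 / (α * σ ^ 2 * z₁ + 1) ^ 2 - 1)
      * ν ^ 2 * T / (2 * σ ^ 2)))
    (hfix₂ : s₂ * z₂ = Real.exp (((α / αl - 1) ^ 2 / (α * σ ^ 2 * z₂ + 1) ^ 2 - 1)
      * ν ^ 2 * T / (2 * σ ^ 2))) :
    z₂ < z₁ :=
  rescaled_parameter_strict_anti_general ν σ T αl α hT hα s₁ s₂ z₁ z₂ hs₁ hs hz₁ hz₂ hfix₁ hfix₂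
end

section
/- Let 0 ≤ s₁ ≤ s₂ and let μ₁ > 0 and μ₂ > 0 be the unique solutions of the fixed-point equation (8) with parameters s₁ and s₂ respectively. Then μ₁ ≤ μ₂; that is, the integral parameter μ(s) is monotone nondecreasing in the effective herd coefficient s. -/
/-! The right-hand side of (8) depends on `s` and `μ` only through `s / (α σ² μ + s)`, which is
nondecreasing in `s` and nonincreasing in `μ`. Hence if `μ₂ < μ₁`, the fixed-point equations give
`μ₁ ≤ μ₂`, a contradiction. -/

open Real

theorem div_mul_add_le_div_mul_add {a s₁ s₂ μ₁ μ₂ : ℝ} (ha : 0 ≤ a) (hs₁ : 0 ≤ s₁)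
    (hs : s₁ ≤ s₂) (hμ₂ : 0 ≤ μ₂) (hμ : μ₂ ≤ μ₁) :
    s₁ / (a * μ₁ + s₁) ≤ s₂ / (a * μ₂ + s₂) := by
  have hd₁ : 0 ≤ a * μ₁ + s₁ := by positivity [hμ₂.trans hμ]
  have hd₂ : 0 ≤ a * μ₂ + s₂ := by positivity [hs₁.trans hs]
  rcases hd₁.eq_or_lt with hd₁ | hd₁
  · rw [← hd₁, div_zero]
    positivity [hs₁.trans hs]
  rcases hd₂.eq_or_lt with hd₂ | hd₂
  · have hs₂ : s₂ = 0 := by nlinarith [mul_nonneg ha hμ₂]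
    rw [show s₁ = 0 by linarith, hs₂, zero_div, zero_div]
  rw [div_le_div_iff₀ hd₁ hd₂]
  nlinarith [mul_le_mul hs hμ hμ₂ (hs₁.trans hs), mul_nonneg ha hs₁]

theorem integral_parameter_monotone_general
    (ν σ T αl α : ℝ) (hT : 0 < T)
    (hα : 0 < α)
    (s₁ s₂ μ₁ μ₂ : ℝ) (hs₁ : 0 ≤ s₁) (hs : s₁ ≤ s₂)
    (hfix₁ : μ₁ = Real.exp (((α / αl - 1) ^ 2 * s₁ ^ 2 / (α * σ ^ 2 * μ₁ + s₁) ^ 2 - 1)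
      * ν ^ 2 * T / (2 * σ ^ 2)))
    (hfix₂ : μ₂ = Real.exp (((α / αl - 1) ^ 2 * s₂ ^ 2 / (α * σ ^ 2 * μ₂ + s₂) ^ 2 - 1)
      * ν ^ 2 * T / (2 * σ ^ 2))) :
    μ₁ ≤ μ₂ := by
  by_contra! hlt
  have hμ₂ : 0 < μ₂ := hfix₂ ▸ exp_pos _
  have hratio := div_mul_add_le_div_mul_add (by positivity : 0 ≤ α * σ ^ 2) hs₁ hs hμ₂.le hlt.le
  have hratio₁ : 0 ≤ s₁ / (α * σ ^ 2 * μ₁ + s₁) := by positivity [hμ₂.trans hlt]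
  have : μ₁ ≤ μ₂ := by
    rw [hfix₁, hfix₂]
    simp only [mul_div_assoc, ← div_pow]
    gcongr
  exact this.not_gt hlt

/-- The integral parameter is monotone nondecreasing in the effective herd coefficient. -/
theorem integral_parameter_monotone
    (ν σ T αl α : ℝ) (hν : 0 < ν) (hσ : 0 < σ) (hT : 0 < T)
    (hαl : 0 < αl) (hα : 0 < α)
    (s₁ s₂ μ₁ μ₂ : ℝ) (hs₁ : 0 ≤ s₁) (hs : s₁ ≤ s₂)
    (hμ₁ : 0 < μ₁) (hμ₂ : 0 < μ₂)
    (hfix₁ : μ₁ = Real.exp (((α / αl - 1) ^ 2 * s₁ ^ 2 / (α * σ ^ 2 * μ₁ + s₁) ^ 2 - 1)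
      * ν ^ 2 * T / (2 * σ ^ 2)))
    (hfix₂ : μ₂ = Real.exp (((α / αl - 1) ^ 2 * s₂ ^ 2 / (α * σ ^ 2 * μ₂ + s₂) ^ 2 - 1)
      * ν ^ 2 * T / (2 * σ ^ 2))) :
    μ₁ ≤ μ₂ :=
  integral_parameter_monotone_general ν σ T αl α hT hα s₁ s₂ μ₁ μ₂ hs₁ hs hfix₁ hfix₂
end

section
/- Let 0 < s₁ ≤ s₂ and let μ₁ > 0 and μ₂ > 0 be the unique solutions of the fixed-point equation (8) with parameters s₁ and s₂ respectively. Then μ₁/(α·σ²·μ₁ + s₁) ≥ μ₂/(α·σ²·μ₂ + s₂). (Consequently the follower's deviation under regulation (effective herd coefficient s = η − u(q(η)) ≤ η) is at least the deviation without regulation (s = η), i.e. δ(ω(η)) ≥ δ(π̄(η)).) -/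
/-!
Write `d = a μ + s` with `a = α σ²`, `r = μ / d` and `t = s / d`. Then `t = 1 - a r` and
`s r = μ t`. The fixed-point equation reads `μ = Φ t` with `Φ` nondecreasing on `t ≥ 0`, so a
larger ratio `r` gives a smaller `t`, hence a smaller `μ t = s r`, which forces a smaller `s`.
-/

open Real Set

lemma monotoneOn_exp_sq_sub_one_mul (c : ℝ) {K : ℝ} (hK : 0 ≤ K) :
    MonotoneOn (fun t => exp ((c ^ 2 * t ^ 2 - 1) * K)) (Ici 0) := by
  intro x (hx : 0 ≤ x) y _ hxy
  dsimp only
  gcongr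

lemma div_add_eq_one_sub_mul_div {a μ s : ℝ} (hd : a * μ + s ≠ 0) :
    s / (a * μ + s) = 1 - a * (μ / (a * μ + s)) := by
  field_simp
  ring

theorem fixedPoint_ratio_antitone {Φ : ℝ → ℝ} (hΦ : MonotoneOn Φ (Ici 0))
    {a s₁ s₂ μ₁ μ₂ : ℝ} (ha : 0 ≤ a) (hs₁ : 0 < s₁) (hs : s₁ ≤ s₂) (hμ₁ : 0 < μ₁)
    (hμ₂ : 0 < μ₂) (h₁ : μ₁ = Φ (s₁ / (a * μ₁ + s₁))) (h₂ : μ₂ = Φ (s₂ / (a * μ₂ + s₂))) :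
    μ₂ / (a * μ₂ + s₂) ≤ μ₁ / (a * μ₁ + s₁) := by
  have hs₂ : 0 < s₂ := hs₁.trans_le hs
  by_contra! hr
  have ht : s₂ / (a * μ₂ + s₂) ≤ s₁ / (a * μ₁ + s₁) := by
    rw [div_add_eq_one_sub_mul_div (by positivity), div_add_eq_one_sub_mul_div (by positivity)]
    gcongr
  have hμ : μ₂ ≤ μ₁ := by
    rw [h₁, h₂]
    exact hΦ (mem_Ici.2 (by positivity)) (mem_Ici.2 (by positivity)) ht
  have := calc
    s₂ * (μ₁ / (a * μ₁ + s₁)) < s₂ * (μ₂ / (a * μ₂ + s₂)) := by gcongr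
    _ = μ₂ * (s₂ / (a * μ₂ + s₂)) := by ring
    _ ≤ μ₁ * (s₁ / (a * μ₁ + s₁)) := by gcongr
    _ = s₁ * (μ₁ / (a * μ₁ + s₁)) := by ring
    _ ≤ s₂ * (μ₁ / (a * μ₁ + s₁)) := by gcongr
  exact lt_irrefl _ this

theorem deviation_ratio_antitone_general
    (ν σ T αl α : ℝ) (hT : 0 < T)
    (hα : 0 < α)
    (s₁ s₂ μ₁ μ₂ : ℝ) (hs₁ : 0 < s₁) (hs : s₁ ≤ s₂)
    (hfix₁ : μ₁ = Real.exp (((α / αl - 1) ^ 2 * s₁ ^ 2 / (α * σ ^ 2 * μ₁ + s₁) ^ 2 - 1)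
      * ν ^ 2 * T / (2 * σ ^ 2)))
    (hfix₂ : μ₂ = Real.exp (((α / αl - 1) ^ 2 * s₂ ^ 2 / (α * σ ^ 2 * μ₂ + s₂) ^ 2 - 1)
      * ν ^ 2 * T / (2 * σ ^ 2))) :
    μ₂ / (α * σ ^ 2 * μ₂ + s₂) ≤ μ₁ / (α * σ ^ 2 * μ₁ + s₁) := by
  have hΦ := monotoneOn_exp_sq_sub_one_mul (α / αl - 1) (K := ν ^ 2 * T / (2 * σ ^ 2))
    (by positivity)
  refine fixedPoint_ratio_antitone hΦ (by positivity) hs₁ hs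
    (hfix₁ ▸ exp_pos _) (hfix₂ ▸ exp_pos _) ?_ ?_
  · exact hfix₁.trans (congrArg exp (by rw [div_pow]; ring))
  · exact hfix₂.trans (congrArg exp (by rw [div_pow]; ring))

/-- The quantity μ(s)/(α σ² μ(s) + s) is nonincreasing in s; hence the deviation
under regulation is at least the deviation without regulation. -/
theorem deviation_ratio_antitone
    (ν σ T αl α : ℝ) (hν : 0 < ν) (hσ : 0 < σ) (hT : 0 < T)
    (hαl : 0 < αl) (hα : 0 < α)
    (s₁ s₂ μ₁ μ₂ : ℝ) (hs₁ : 0 < s₁) (hs : s₁ ≤ s₂)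
    (hμ₁ : 0 < μ₁) (hμ₂ : 0 < μ₂)
    (hfix₁ : μ₁ = Real.exp (((α / αl - 1) ^ 2 * s₁ ^ 2 / (α * σ ^ 2 * μ₁ + s₁) ^ 2 - 1)
      * ν ^ 2 * T / (2 * σ ^ 2)))
    (hfix₂ : μ₂ = Real.exp (((α / αl - 1) ^ 2 * s₂ ^ 2 / (α * σ ^ 2 * μ₂ + s₂) ^ 2 - 1)
      * ν ^ 2 * T / (2 * σ ^ 2))) :
    μ₂ / (α * σ ^ 2 * μ₂ + s₂) ≤ μ₁ / (α * σ ^ 2 * μ₁ + s₁) :=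
  deviation_ratio_antitone_general ν σ T αl α hT hα s₁ s₂ μ₁ μ₂ hs₁ hs hfix₁ hfix₂
end

section
/- (Content of Theorem 4: monotonicity of the expected terminal fund in the policy.) For s > 0 let μ(s) > 0 be the unique solution of the fixed-point equation (8) with parameter s, and define E(s) := ((α̃·σ²·μ(s) + s)/(α·σ²·μ(s) + s))·(ν²·T/(α̃·σ²)) (the follower's expected terminal fund when the effective herd coefficient is s = η − u(q(η))). Then for all 0 < s₁ ≤ s₂: if α ≤ α̃ then E(s₁) ≥ E(s₂) (a stronger policy, i.e. smaller s, weakly increases the expected terminal fund), and if α ≥ α̃ then E(s₁) ≤ E(s₂) (a stronger policy weakly decreases it). -/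
/-!
With `r(s) = μ(s) / s`, the fund is proportional to `(α̃σ² r + 1) / (ασ² r + 1)`, which is
increasing in `r` when `α ≤ α̃` and decreasing when `α̃ ≤ α`. The fixed-point equation forces `r`
to be antitone: the right-hand side of (8) is increasing in `s / (ασ² μ + s) = 1 / (ασ² r + 1)`,
so if `r` increased from `s₁` to `s₂` we would get `μ(s₂) ≤ μ(s₁)`, whence `r(s₂) ≤ r(s₁)`.
-/

open Set Real

theorem mul_add_div_mul_add_mono {a b x₁ x₂ s₁ s₂ : ℝ} (ha : 0 ≤ a) (hab : a ≤ b)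
    (hx₁ : 0 ≤ x₁) (hx₂ : 0 ≤ x₂) (hs₁ : 0 < s₁) (hs₂ : 0 < s₂) (h : x₂ / s₂ ≤ x₁ / s₁) :
    (b * x₂ + s₂) / (a * x₂ + s₂) ≤ (b * x₁ + s₁) / (a * x₁ + s₁) := by
  rw [div_le_div_iff₀ hs₂ hs₁] at h
  rw [div_le_div_iff₀ (by positivity) (by positivity)]
  nlinarith [mul_le_mul_of_nonneg_left h (sub_nonneg.2 hab)]

theorem mul_add_div_mul_add_anti {a b x₁ x₂ s₁ s₂ : ℝ} (ha : 0 ≤ a) (hba : b ≤ a)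
    (hx₁ : 0 ≤ x₁) (hx₂ : 0 ≤ x₂) (hs₁ : 0 < s₁) (hs₂ : 0 < s₂) (h : x₂ / s₂ ≤ x₁ / s₁) :
    (b * x₁ + s₁) / (a * x₁ + s₁) ≤ (b * x₂ + s₂) / (a * x₂ + s₂) := by
  rw [div_le_div_iff₀ hs₂ hs₁] at h
  rw [div_le_div_iff₀ (by positivity) (by positivity)]
  nlinarith [mul_le_mul_of_nonneg_left h (sub_nonneg.2 hba)]

theorem antitoneOn_div_of_fixedPoint {G μ : ℝ → ℝ} {c : ℝ} (hG : MonotoneOn G (Ioi 0))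
    (hc : 0 ≤ c) (hμ_nonneg : ∀ s, 0 < s → 0 ≤ μ s)
    (hμ_eq : ∀ s, 0 < s → μ s = G (s / (c * μ s + s))) :
    AntitoneOn (fun s => μ s / s) (Ioi 0) := by
  intro s₁ (hs₁ : 0 < s₁) s₂ (hs₂ : 0 < s₂) hs
  have hd : ∀ s, 0 < s → 0 < c * μ s + s :=
    fun s hs => add_pos_of_nonneg_of_pos (mul_nonneg hc (hμ_nonneg s hs)) hs
  by_contra! h
  rw [div_lt_div_iff₀ hs₁ hs₂] at h
  have hy : s₂ / (c * μ s₂ + s₂) ≤ s₁ / (c * μ s₁ + s₁) := by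
    rw [div_le_div_iff₀ (hd s₂ hs₂) (hd s₁ hs₁)]
    nlinarith [mul_le_mul_of_nonneg_left h.le hc]
  have hμ_le : μ s₂ ≤ μ s₁ :=
    calc μ s₂ = G (s₂ / (c * μ s₂ + s₂)) := hμ_eq s₂ hs₂
      _ ≤ G (s₁ / (c * μ s₁ + s₁)) :=
        hG (div_pos hs₂ (hd s₂ hs₂)) (div_pos hs₁ (hd s₁ hs₁)) hy
      _ = μ s₁ := (hμ_eq s₁ hs₁).symm
  nlinarith [mul_le_mul_of_nonneg_left hs (hμ_nonneg s₁ hs₁)]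

theorem expected_fund_monotone_policy_general
    (ν σ T αl α : ℝ) (hT : 0 < T)
    (hαl : 0 < αl) (hα : 0 < α)
    (μ : ℝ → ℝ)
    (hμ : ∀ s : ℝ, 0 < s → 0 < μ s ∧
      μ s = Real.exp (((α / αl - 1) ^ 2 * s ^ 2 / (α * σ ^ 2 * μ s + s) ^ 2 - 1)
        * ν ^ 2 * T / (2 * σ ^ 2)))
    (s₁ s₂ : ℝ) (hs₁ : 0 < s₁) (hs : s₁ ≤ s₂) :
    (α ≤ αl →
      (αl * σ ^ 2 * μ s₂ + s₂) / (α * σ ^ 2 * μ s₂ + s₂) * (ν ^ 2 * T / (αl * σ ^ 2)) ≤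
      (αl * σ ^ 2 * μ s₁ + s₁) / (α * σ ^ 2 * μ s₁ + s₁) * (ν ^ 2 * T / (αl * σ ^ 2))) ∧
    (αl ≤ α →
      (αl * σ ^ 2 * μ s₁ + s₁) / (α * σ ^ 2 * μ s₁ + s₁) * (ν ^ 2 * T / (αl * σ ^ 2)) ≤
      (αl * σ ^ 2 * μ s₂ + s₂) / (α * σ ^ 2 * μ s₂ + s₂) * (ν ^ 2 * T / (αl * σ ^ 2))) := by
  have hs₂ : 0 < s₂ := hs₁.trans_le hs
  have hμ₁ := (hμ s₁ hs₁).1.le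
  have hμ₂ := (hμ s₂ hs₂).1.le
  have hG : MonotoneOn (fun y => exp (((α / αl - 1) ^ 2 * y ^ 2 - 1) * ν ^ 2 * T / (2 * σ ^ 2)))
      (Ioi 0) := by
    intro y₁ (hy₁ : 0 < y₁) y₂ _ hy
    dsimp only
    gcongr
  have hratio : μ s₂ / s₂ ≤ μ s₁ / s₁ :=
    antitoneOn_div_of_fixedPoint (c := α * σ ^ 2) hG (by positivity) (fun s hs => (hμ s hs).1.le)
      (fun s hs => (hμ s hs).2.trans (by simp only [div_pow, mul_div_assoc])) hs₁ hs₂ hs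
  have hfund : 0 ≤ ν ^ 2 * T / (αl * σ ^ 2) := by positivity
  refine ⟨fun h => mul_le_mul_of_nonneg_right ?_ hfund,
    fun h => mul_le_mul_of_nonneg_right ?_ hfund⟩
  · exact mul_add_div_mul_add_mono (by positivity) (by gcongr) hμ₁ hμ₂ hs₁ hs₂ hratio
  · exact mul_add_div_mul_add_anti (by positivity) (by gcongr) hμ₁ hμ₂ hs₁ hs₂ hratio

/-- Monotonicity of the expected terminal fund in the effective herd coefficient
(Theorem 4: a stronger policy increases the fund iff the follower is more risk-taking). -/
theorem expected_fund_monotone_policy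
    (ν σ T αl α : ℝ) (hν : 0 < ν) (hσ : 0 < σ) (hT : 0 < T)
    (hαl : 0 < αl) (hα : 0 < α)
    (μ : ℝ → ℝ)
    (hμ : ∀ s : ℝ, 0 < s → 0 < μ s ∧
      μ s = Real.exp (((α / αl - 1) ^ 2 * s ^ 2 / (α * σ ^ 2 * μ s + s) ^ 2 - 1)
        * ν ^ 2 * T / (2 * σ ^ 2)))
    (s₁ s₂ : ℝ) (hs₁ : 0 < s₁) (hs : s₁ ≤ s₂) :
    (α ≤ αl →
      (αl * σ ^ 2 * μ s₂ + s₂) / (α * σ ^ 2 * μ s₂ + s₂) * (ν ^ 2 * T / (αl * σ ^ 2)) ≤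
      (αl * σ ^ 2 * μ s₁ + s₁) / (α * σ ^ 2 * μ s₁ + s₁) * (ν ^ 2 * T / (αl * σ ^ 2))) ∧
    (αl ≤ α →
      (αl * σ ^ 2 * μ s₁ + s₁) / (α * σ ^ 2 * μ s₁ + s₁) * (ν ^ 2 * T / (αl * σ ^ 2)) ≤
      (αl * σ ^ 2 * μ s₂ + s₂) / (α * σ ^ 2 * μ s₂ + s₂) * (ν ^ 2 * T / (αl * σ ^ 2))) :=
  expected_fund_monotone_policy_general ν σ T αl α hT hαl hα μ hμ s₁ s₂ hs₁ hs
end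

section
/- (Content of Theorem 8: strict positivity of the economic gain.) Suppose α < α̃, and let 0 < s < η, where s = η − u(q(η)) is the effective herd coefficient under regulation. For t > 0 let μ(t) > 0 be the unique solution of the fixed-point equation (8) with parameter t, and let E(t) := ((α̃·σ²·μ(t) + t)/(α·σ²·μ(t) + t))·(ν²·T/(α̃·σ²)). Then the economic gain is strictly positive: E(s) − E(η) > 0. -/
/-!
Write `q(t) = t / (α σ² μ(t) + t)`, so that `μ(t)` is a nondecreasing function of `q(t) ≥ 0`. If
`μ(η)/η ≥ μ(s)/s` then `q(η) ≤ q(s)`, hence `μ(η) ≤ μ(s)` and `μ(s)/η ≥ μ(s)/s`, contradicting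
`s < η`. So `μ(t)/t` strictly decreases from `s` to `η`, and the expected fund
`(α̃ σ² μ + t)/(α σ² μ + t)`, an increasing function of `μ/t` when `α < α̃`, strictly decreases too.
-/

open Real Set

theorem add_div_add_lt_of_mul_lt {a b x y s t : ℝ} (ha : 0 ≤ a) (hab : a < b)
    (hs : 0 < s) (ht : 0 < t) (hx : 0 ≤ x) (hy : 0 ≤ y) (h : s * y < t * x) :
    (b * y + t) / (a * y + t) < (b * x + s) / (a * x + s) := by
  rw [div_lt_div_iff₀ (by positivity) (by positivity)]
  nlinarith [mul_lt_mul_of_pos_left h (sub_pos.mpr hab)]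

theorem mul_lt_mul_of_eq_apply_div_mul_add {F : ℝ → ℝ} (hF : MonotoneOn F (Ici 0))
    {c s t ms mt : ℝ} (hc : 0 ≤ c) (hs : 0 < s) (hst : s < t) (hms : 0 < ms) (hmt : 0 ≤ mt)
    (hs_fix : ms = F (s / (c * ms + s))) (ht_fix : mt = F (t / (c * mt + t))) :
    s * mt < t * ms := by
  have ht : 0 < t := hs.trans hst
  by_contra! h
  have hdiv : t / (c * mt + t) ≤ s / (c * ms + s) := by
    rw [div_le_div_iff₀ (by positivity) (by positivity)]
    nlinarith [mul_le_mul_of_nonneg_left h hc]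
  have hmono : mt ≤ ms := by
    rw [hs_fix, ht_fix]
    exact hF (by positivity : (0 : ℝ) ≤ _) (by positivity : (0 : ℝ) ≤ _) hdiv
  have : t * ms ≤ s * ms := h.trans (mul_le_mul_of_nonneg_left hmono hs.le)
  exact hst.not_ge (le_of_mul_le_mul_right this hms)

theorem economic_gain_pos_general
    (ν σ T αl α : ℝ) (hν : 0 < ν) (hσ : 0 < σ) (hT : 0 < T)
    (hα : 0 < α) (hlt : α < αl)
    (s η : ℝ) (hs : 0 < s) (hsη : s < η)
    (μ : ℝ → ℝ)
    (hμ : ∀ t : ℝ, 0 < t → 0 < μ t ∧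
      μ t = Real.exp (((α / αl - 1) ^ 2 * t ^ 2 / (α * σ ^ 2 * μ t + t) ^ 2 - 1)
        * ν ^ 2 * T / (2 * σ ^ 2))) :
    0 < (αl * σ ^ 2 * μ s + s) / (α * σ ^ 2 * μ s + s) * (ν ^ 2 * T / (αl * σ ^ 2)) -
        (αl * σ ^ 2 * μ η + η) / (α * σ ^ 2 * μ η + η) * (ν ^ 2 * T / (αl * σ ^ 2)) := by
  set F : ℝ → ℝ := fun q ↦ exp (((α / αl - 1) ^ 2 * q ^ 2 - 1) * ν ^ 2 * T / (2 * σ ^ 2))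
  have hF : MonotoneOn F (Ici 0) := fun a ha b _ hab ↦ by
    simp only [F]
    gcongr
  have hfix : ∀ t, 0 < t → 0 < μ t ∧ μ t = F (t / (α * σ ^ 2 * μ t + t)) := fun t ht ↦ by
    obtain ⟨hpos, heq⟩ := hμ t ht
    simpa only [F, div_pow, mul_div_assoc] using And.intro hpos heq
  obtain ⟨hμs, hs_fix⟩ := hfix s hs
  obtain ⟨hμη, hη_fix⟩ := hfix η (hs.trans hsη)
  have hdecr : s * μ η < η * μ s :=
    mul_lt_mul_of_eq_apply_div_mul_add hF (by positivity) hs hsη hμs hμη.le hs_fix hη_fix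
  have hratio := add_div_add_lt_of_mul_lt (by positivity)
    (mul_lt_mul_of_pos_right hlt (pow_pos hσ 2)) hs (hs.trans hsη) hμs.le hμη.le hdecr
  have hαl : 0 < αl := hα.trans hlt
  exact sub_pos.mpr (mul_lt_mul_of_pos_right hratio (by positivity))

/-- Strict positivity of the economic gain (content of Theorem 8). -/
theorem economic_gain_pos
    (ν σ T αl α : ℝ) (hν : 0 < ν) (hσ : 0 < σ) (hT : 0 < T)
    (hαl : 0 < αl) (hα : 0 < α) (hlt : α < αl)
    (s η : ℝ) (hs : 0 < s) (hsη : s < η)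
    (μ : ℝ → ℝ)
    (hμ : ∀ t : ℝ, 0 < t → 0 < μ t ∧
      μ t = Real.exp (((α / αl - 1) ^ 2 * t ^ 2 / (α * σ ^ 2 * μ t + t) ^ 2 - 1)
        * ν ^ 2 * T / (2 * σ ^ 2))) :
    0 < (αl * σ ^ 2 * μ s + s) / (α * σ ^ 2 * μ s + s) * (ν ^ 2 * T / (αl * σ ^ 2)) -
        (αl * σ ^ 2 * μ η + η) / (α * σ ^ 2 * μ η + η) * (ν ^ 2 * T / (αl * σ ^ 2)) :=
  economic_gain_pos_general ν σ T αl α hν hσ hT hα hlt s η hs hsη μ hμ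
end

section
/- (Quadratic decay of the unregulated deviation.) For η > 0 let μ̄(η) > 0 be the unique solution of the fixed-point equation (8) with parameter η, and let δ̄(η) := ((α̃ − α)·σ²·μ̄(η)/(α·σ²·μ̄(η) + η))²·ν²·T/(2·α̃²·σ⁴) be the deviation of the follower's optimal decision without regulation. Then for every η > 0, δ̄(η) ≤ C/η², where C := ((α̃ − α)·σ²·M)²·ν²·T/(2·α̃²·σ⁴) and M := exp(((α/α̃ − 1)² − 1)·ν²·T/(2·σ²)). In particular δ̄(η) = O(η⁻²) as η → ∞. -/
/-!
Since `s ^ 2 / (α σ² μ + s) ^ 2 ≤ 1`, the exponent in the fixed-point equation (8) never exceeds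
`((α / α̃ - 1) ^ 2 - 1) ν² T / (2 σ²)`, so `μ̄(η) ≤ M` uniformly in `η`. Dropping `α σ² μ̄(η)` from
the denominator then gives `μ̄(η) / (α σ² μ̄(η) + η) ≤ M / η`, and squaring yields `δ̄(η) ≤ C / η²`.
-/

open Real

lemma mul_sq_div_add_sq_le_self {k x s : ℝ} (hk : 0 ≤ k) (hx : 0 ≤ x) (hs : 0 ≤ s) :
    k * s ^ 2 / (x + s) ^ 2 ≤ k := by
  have hratio : s / (x + s) ≤ 1 := div_le_one_of_le₀ (le_add_of_nonneg_left hx) (by positivity)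
  calc k * s ^ 2 / (x + s) ^ 2 = k * (s / (x + s)) ^ 2 := by rw [mul_div_assoc, div_pow]
    _ ≤ k * 1 := by gcongr; exact pow_le_one₀ (by positivity) hratio
    _ = k := mul_one k

theorem unregulated_deviation_quadratic_decay_general
    (ν σ T αl α : ℝ) (hT : 0 < T)
    (hα : 0 < α)
    (μbar : ℝ → ℝ)
    (hμbar : ∀ η : ℝ, 0 < η → 0 < μbar η ∧
      μbar η = Real.exp (((α / αl - 1) ^ 2 * η ^ 2 / (α * σ ^ 2 * μbar η + η) ^ 2 - 1)
        * ν ^ 2 * T / (2 * σ ^ 2))) :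
    ∀ η : ℝ, 0 < η →
      ((αl - α) * σ ^ 2 * μbar η / (α * σ ^ 2 * μbar η + η)) ^ 2 * ν ^ 2 * T / (2 * αl ^ 2 * σ ^ 4)
        ≤ (((αl - α) * σ ^ 2 * Real.exp (((α / αl - 1) ^ 2 - 1) * ν ^ 2 * T / (2 * σ ^ 2))) ^ 2
            * ν ^ 2 * T / (2 * αl ^ 2 * σ ^ 4)) / η ^ 2 := by
  intro η hη
  obtain ⟨hμ, hfix⟩ := hμbar η hη
  set μ := μbar η
  set M := exp (((α / αl - 1) ^ 2 - 1) * ν ^ 2 * T / (2 * σ ^ 2))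
  have hden : η ≤ α * σ ^ 2 * μ + η := le_add_of_nonneg_left (by positivity)
  have hμM : μ ≤ M := by
    rw [hfix]
    refine exp_le_exp.2 ?_
    gcongr
    exact mul_sq_div_add_sq_le_self (sq_nonneg _) (by positivity) hη.le
  have hratio : μ / (α * σ ^ 2 * μ + η) ≤ M / η := div_le_div₀ (exp_pos _).le hμM hη hden
  calc _ = ((αl - α) * σ ^ 2) ^ 2 * (μ / (α * σ ^ 2 * μ + η)) ^ 2
          * (ν ^ 2 * T / (2 * αl ^ 2 * σ ^ 4)) := by ring
    _ ≤ ((αl - α) * σ ^ 2) ^ 2 * (M / η) ^ 2 * (ν ^ 2 * T / (2 * αl ^ 2 * σ ^ 4)) := by gcongr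
    _ = _ := by ring

/-- Quadratic decay of the unregulated deviation: δ̄(η) ≤ C/η². -/
theorem unregulated_deviation_quadratic_decay
    (ν σ T αl α : ℝ) (hν : 0 < ν) (hσ : 0 < σ) (hT : 0 < T)
    (hαl : 0 < αl) (hα : 0 < α)
    (μbar : ℝ → ℝ)
    (hμbar : ∀ η : ℝ, 0 < η → 0 < μbar η ∧
      μbar η = Real.exp (((α / αl - 1) ^ 2 * η ^ 2 / (α * σ ^ 2 * μbar η + η) ^ 2 - 1)
        * ν ^ 2 * T / (2 * σ ^ 2))) :
    ∀ η : ℝ, 0 < η →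
      ((αl - α) * σ ^ 2 * μbar η / (α * σ ^ 2 * μbar η + η)) ^ 2 * ν ^ 2 * T / (2 * αl ^ 2 * σ ^ 4)
        ≤ (((αl - α) * σ ^ 2 * Real.exp (((α / αl - 1) ^ 2 - 1) * ν ^ 2 * T / (2 * σ ^ 2))) ^ 2
            * ν ^ 2 * T / (2 * αl ^ 2 * σ ^ 4)) / η ^ 2 :=
  unregulated_deviation_quadratic_decay_general ν σ T αl α hT hα μbar hμbar
end

section
/- (Integrability of the unregulated deviation, used for the convergence of the constant compensation utility χ.) For η > 0 let μ̄(η) > 0 be the unique solution of the fixed-point equation (8) with parameter η, and let δ̄(η) := ((α̃ − α)·σ²·μ̄(η)/(α·σ²·μ̄(η) + η))²·ν²·T/(2·α̃²·σ⁴). Then the function η ↦ δ̄(η) is integrable on (0, ∞), i.e. the improper integral ∫₀^∞ δ̄(η) dη converges to a finite value. -/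
/-!
The fixed point `μ̄(η)` is an increasing function of `η` (the right-hand side of the fixed-point
equation is increasing in `η / (α σ² μ + η)`, which increases in `η` and decreases in `μ`), hence
measurable, and it is bounded by its value `M` at ratio `1`. Since `μ ↦ μ / (α σ² μ + η)` is
increasing, the deviation is then dominated by a multiple of `(α σ² M + η)⁻²`, which is integrable
on `(0, ∞)`.
-/

open MeasureTheory Set

lemma div_add_le_div_add {p q x y : ℝ} (hx : 0 < x) (hxy : x ≤ y) (hq : 0 ≤ q) (hqp : q ≤ p) :
    x / (p + x) ≤ y / (q + y) := by
  rw [div_le_div_iff₀ (by linarith) (by linarith)]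
  nlinarith [mul_le_mul hxy hqp hq (hx.le.trans hxy)]

lemma div_mul_add_le_div_mul_add_s16 {a μ M η : ℝ} (ha : 0 ≤ a) (hμ : 0 ≤ μ) (hμM : μ ≤ M)
    (hη : 0 < η) : μ / (a * μ + η) ≤ M / (a * M + η) := by
  have hμM' : a * μ ≤ a * M := mul_le_mul_of_nonneg_left hμM ha
  rw [div_le_div_iff₀ (by positivity) (by linarith [mul_nonneg ha hμ])]
  nlinarith [mul_le_mul_of_nonneg_left hμM hη.le]

section FixedPoint

variable {a : ℝ} {G m : ℝ → ℝ}

lemma monotoneOn_of_eq_comp_div_mul_add (ha : 0 ≤ a) (hG : MonotoneOn G (Ici 0))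
    (hm : ∀ η, 0 < η → 0 < m η ∧ m η = G (η / (a * m η + η))) : MonotoneOn m (Ioi 0) := by
  intro x (hx : 0 < x) y (hy : 0 < y) hxy
  by_contra! hlt
  obtain ⟨hmx, hx_eq⟩ := hm x hx
  obtain ⟨hmy, hy_eq⟩ := hm y hy
  have hratio : x / (a * m x + x) ≤ y / (a * m y + y) :=
    div_add_le_div_add hx hxy (by positivity) (mul_le_mul_of_nonneg_left hlt.le ha)
  have hx_ratio : 0 ≤ x / (a * m x + x) := by positivity
  have : m x ≤ m y := by
    rw [hx_eq, hy_eq]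
    exact hG hx_ratio (hx_ratio.trans hratio) hratio
  exact hlt.not_ge this

lemma le_of_eq_comp_div_mul_add {μ η : ℝ} (ha : 0 ≤ a) (hG : MonotoneOn G (Ici 0)) (hμ : 0 ≤ μ)
    (hη : 0 < η) (h : μ = G (η / (a * μ + η))) : μ ≤ G 1 := by
  have hden : 0 < a * μ + η := by positivity
  rw [h]
  exact hG (div_nonneg hη.le hden.le) (mem_Ici.2 zero_le_one)
    ((div_le_one hden).2 (by linarith [mul_nonneg ha hμ]))

end FixedPoint

lemma integrableOn_Ioi_sq_mul_div_mul_add {a k M : ℝ} {m : ℝ → ℝ} (ha : 0 < a)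
    (hm : MonotoneOn m (Ioi 0)) (hpos : ∀ η, 0 < η → 0 < m η) (hle : ∀ η, 0 < η → m η ≤ M) :
    IntegrableOn (fun η => (k * m η / (a * m η + η)) ^ 2) (Ioi 0) := by
  have hM : 0 < M := (hpos 1 one_pos).trans_le (hle 1 one_pos)
  have hdom : IntegrableOn (fun η : ℝ => (k * M) ^ 2 * (η + a * M) ^ (-2 : ℝ)) (Ioi 0) :=
    (integrableOn_add_rpow_Ioi_of_lt (by norm_num) (by linarith [mul_pos ha hM])).const_mul _
  have hmeas : AEMeasurable m (volume.restrict (Ioi 0)) :=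
    aemeasurable_restrict_of_monotoneOn measurableSet_Ioi hm
  refine hdom.mono' (by fun_prop : AEMeasurable _ _).aestronglyMeasurable ?_
  filter_upwards [ae_restrict_mem measurableSet_Ioi] with η (hη : 0 < η)
  have hmη := hpos η hη
  have hbound := div_mul_add_le_div_mul_add_s16 ha.le hmη.le (hle η hη) hη
  calc ‖(k * m η / (a * m η + η)) ^ 2‖ = k ^ 2 * (m η / (a * m η + η)) ^ 2 := by
        rw [Real.norm_of_nonneg (sq_nonneg _)]; ring
    _ ≤ k ^ 2 * (M / (a * M + η)) ^ 2 := by gcongr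
    _ = (k * M) ^ 2 * (η + a * M) ^ (-2 : ℝ) := by
        rw [Real.rpow_neg (by positivity), Real.rpow_two, div_pow, add_comm η]; ring

theorem unregulated_deviation_integrable_general
    (ν σ T αl α : ℝ) (hσ : 0 < σ) (hT : 0 < T)
    (hα : 0 < α)
    (μbar : ℝ → ℝ)
    (hμbar : ∀ η : ℝ, 0 < η → 0 < μbar η ∧
      μbar η = Real.exp (((α / αl - 1) ^ 2 * η ^ 2 / (α * σ ^ 2 * μbar η + η) ^ 2 - 1)
        * ν ^ 2 * T / (2 * σ ^ 2))) :
    MeasureTheory.IntegrableOn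
      (fun η : ℝ =>
        ((αl - α) * σ ^ 2 * μbar η / (α * σ ^ 2 * μbar η + η)) ^ 2 * ν ^ 2 * T
          / (2 * αl ^ 2 * σ ^ 4))
      (Set.Ioi 0) := by
  set G : ℝ → ℝ := fun t => Real.exp (((α / αl - 1) ^ 2 * t ^ 2 - 1) * ν ^ 2 * T / (2 * σ ^ 2))
  have ha : 0 < α * σ ^ 2 := by positivity
  have hG : MonotoneOn G (Ici 0) := by
    intro s (hs : 0 ≤ s) t _ hst
    simp only [G, Real.exp_le_exp]
    gcongr
  have hfix : ∀ η, 0 < η → 0 < μbar η ∧ μbar η = G (η / (α * σ ^ 2 * μbar η + η)) :=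
    fun η hη => ⟨(hμbar η hη).1, (hμbar η hη).2.trans (by simp only [G, div_pow, mul_div_assoc])⟩
  have hbound : ∀ η, 0 < η → μbar η ≤ G 1 := fun η hη =>
    le_of_eq_comp_div_mul_add ha.le hG (hfix η hη).1.le hη (hfix η hη).2
  exact ((integrableOn_Ioi_sq_mul_div_mul_add ha (monotoneOn_of_eq_comp_div_mul_add ha.le hG hfix)
    (fun η hη => (hfix η hη).1) hbound).mul_const _ |>.mul_const _).div_const _

/-- Integrability of the unregulated deviation on (0, ∞). -/
theorem unregulated_deviation_integrable
    (ν σ T αl α : ℝ) (hν : 0 < ν) (hσ : 0 < σ) (hT : 0 < T)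
    (hαl : 0 < αl) (hα : 0 < α)
    (μbar : ℝ → ℝ)
    (hμbar : ∀ η : ℝ, 0 < η → 0 < μbar η ∧
      μbar η = Real.exp (((α / αl - 1) ^ 2 * η ^ 2 / (α * σ ^ 2 * μbar η + η) ^ 2 - 1)
        * ν ^ 2 * T / (2 * σ ^ 2))) :
    MeasureTheory.IntegrableOn
      (fun η : ℝ =>
        ((αl - α) * σ ^ 2 * μbar η / (α * σ ^ 2 * μbar η + η)) ^ 2 * ν ^ 2 * T
          / (2 * αl ^ 2 * σ ^ 4))
      (Set.Ioi 0) :=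
  unregulated_deviation_integrable_general ν σ T αl α hσ hT hα μbar hμbar
end

section
/- (Limit of the integral parameter for strong herding.) For s > 0 let μ(s) > 0 be the unique solution of the fixed-point equation (8) with parameter s. Then μ(s) converges as s → ∞, with limit lim_{s→∞} μ(s) = exp(((α/α̃ − 1)² − 1)·ν²·T/(2·σ²)). -/
/-!
The fixed-point equation has the form `μ s = F (s / (a μ s + s))` with `F` continuous and
`a = α σ² ≥ 0`. As `μ s > 0`, the ratio `s / (a μ s + s)` lies in `[0, 1]`, so `μ s` stays in the
compact image `F '' [0, 1]` and is bounded. Hence `a μ s / s → 0`, the ratio tends to `1`, and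
`μ s → F 1` by continuity.
-/

open Filter Topology Set

lemma div_add_self_mem_Icc {b s : ℝ} (hb : 0 ≤ b) (hs : 0 < s) : s / (b + s) ∈ Icc 0 1 :=
  ⟨by positivity, (div_le_one (by positivity)).2 (le_add_of_nonneg_left hb)⟩

lemma tendsto_div_add_self_atTop_of_isBoundedUnder {g : ℝ → ℝ}
    (hg : IsBoundedUnder (· ≤ ·) atTop (norm ∘ g)) :
    Tendsto (fun s => s / (g s + s)) atTop (𝓝 1) := by
  have h_ratio : Tendsto (fun s => s⁻¹ * g s) atTop (𝓝 0) :=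
    tendsto_inv_atTop_zero.zero_mul_isBoundedUnder_le hg
  have h_inv : Tendsto (fun s => (s⁻¹ * g s + 1)⁻¹) atTop (𝓝 1) := by
    simpa using (h_ratio.add_const 1).inv₀ (by norm_num)
  refine h_inv.congr' ?_
  filter_upwards [eventually_gt_atTop 0] with s hs
  rw [← inv_div, add_div, div_self hs.ne', div_eq_inv_mul]

theorem tendsto_of_eq_comp_div_add_self {F : ℝ → ℝ} (hF : Continuous F) {a : ℝ} (ha : 0 ≤ a)
    {m : ℝ → ℝ} (hm_nonneg : ∀ s, 0 < s → 0 ≤ m s)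
    (hm : ∀ s, 0 < s → m s = F (s / (a * m s + s))) :
    Tendsto m atTop (𝓝 (F 1)) := by
  have h_mem : ∀ s, 0 < s → s / (a * m s + s) ∈ Icc 0 1 := fun s hs =>
    div_add_self_mem_Icc (mul_nonneg ha (hm_nonneg s hs)) hs
  obtain ⟨C, hC⟩ := isCompact_Icc.exists_bound_of_continuousOn hF.continuousOn
  have h_bdd : IsBoundedUnder (· ≤ ·) atTop (norm ∘ fun s => a * m s) := by
    refine ⟨‖a‖ * C, eventually_map.2 ?_⟩
    filter_upwards [eventually_gt_atTop 0] with s hs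
    rw [Function.comp_apply, norm_mul, hm s hs]
    exact mul_le_mul_of_nonneg_left (hC _ (h_mem s hs)) (norm_nonneg a)
  refine ((hF.tendsto 1).comp (tendsto_div_add_self_atTop_of_isBoundedUnder h_bdd)).congr' ?_
  filter_upwards [eventually_gt_atTop 0] with s hs
  exact (hm s hs).symm

theorem integral_parameter_limit_atTop_general
    (ν σ T αl α : ℝ) (hα : 0 < α)
    (μ : ℝ → ℝ)
    (hμ : ∀ s : ℝ, 0 < s → 0 < μ s ∧
      μ s = Real.exp (((α / αl - 1) ^ 2 * s ^ 2 / (α * σ ^ 2 * μ s + s) ^ 2 - 1)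
        * ν ^ 2 * T / (2 * σ ^ 2))) :
    Filter.Tendsto μ Filter.atTop
      (nhds (Real.exp (((α / αl - 1) ^ 2 - 1) * ν ^ 2 * T / (2 * σ ^ 2)))) := by
  set F : ℝ → ℝ := fun x => Real.exp (((α / αl - 1) ^ 2 * x ^ 2 - 1) * ν ^ 2 * T / (2 * σ ^ 2))
  have hF : Continuous F := by fun_prop
  have h_lim := tendsto_of_eq_comp_div_add_self (a := α * σ ^ 2) hF (by positivity)
    (fun s hs => (hμ s hs).1.le) fun s hs => by
      conv_lhs => rw [(hμ s hs).2]
      simp only [F, div_pow, mul_div_assoc]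
  simpa [F] using h_lim

/-- Limit of the integral parameter for strong herding. -/
theorem integral_parameter_limit_atTop
    (ν σ T αl α : ℝ) (hν : 0 < ν) (hσ : 0 < σ) (hT : 0 < T)
    (hαl : 0 < αl) (hα : 0 < α)
    (μ : ℝ → ℝ)
    (hμ : ∀ s : ℝ, 0 < s → 0 < μ s ∧
      μ s = Real.exp (((α / αl - 1) ^ 2 * s ^ 2 / (α * σ ^ 2 * μ s + s) ^ 2 - 1)
        * ν ^ 2 * T / (2 * σ ^ 2))) :
    Filter.Tendsto μ Filter.atTop
      (nhds (Real.exp (((α / αl - 1) ^ 2 - 1) * ν ^ 2 * T / (2 * σ ^ 2)))) :=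
  integral_parameter_limit_atTop_general ν σ T αl α hα μ hμ
end

section
/- (The follower's decision converges to the leader's as herding grows.) For s > 0 let μ(s) > 0 be the unique solution of the fixed-point equation (8) with parameter s. Then the proportionality factor of the follower's optimal response relative to the leader's decision converges to 1: lim_{s→∞} (α̃·σ²·μ(s) + s)/(α·σ²·μ(s) + s) = 1. -/
/-!
The fixed-point equation forces `μ` to be bounded: since `s / (α σ² μ + s) ∈ (0, 1]`, its exponent
never exceeds `(α / α̃ - 1)² ν² T / (2 σ²)`. For a bounded `μ` the terms `α̃ σ² μ(s)` and `α σ² μ(s)`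
are negligible against `s`, so the quotient tends to `1`.
-/

open Filter Topology Real

theorem tendsto_mul_add_div_mul_add_atTop {f : ℝ → ℝ} (a b : ℝ)
    (hf : IsBoundedUnder (· ≤ ·) atTop (norm ∘ f)) :
    Tendsto (fun s => (a * f s + s) / (b * f s + s)) atTop (𝓝 1) := by
  have hfs : Tendsto (fun s => s⁻¹ * f s) atTop (𝓝 0) :=
    tendsto_inv_atTop_zero.zero_mul_isBoundedUnder_le hf
  have hlim : Tendsto (fun s => (a * (s⁻¹ * f s) + 1) / (b * (s⁻¹ * f s) + 1)) atTop
      (𝓝 ((a * 0 + 1) / (b * 0 + 1))) :=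
    ((hfs.const_mul a).add_const 1).div ((hfs.const_mul b).add_const 1) (by simp)
  rw [show (a * 0 + 1) / (b * 0 + 1) = (1 : ℝ) by simp] at hlim
  refine hlim.congr' ?_
  filter_upwards [eventually_ne_atTop 0] with s hs
  field_simp

theorem exp_mul_sq_div_sq_sub_one_le {k c a s : ℝ} (hk : 0 ≤ k) (hc : 0 ≤ c) (ha : 0 ≤ a)
    (hs : 0 < s) : rexp ((k * s ^ 2 / (a + s) ^ 2 - 1) * c) ≤ rexp (k * c) := by
  have hratio : s ^ 2 / (a + s) ^ 2 ≤ 1 := by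
    rw [← div_pow]
    exact pow_le_one₀ (by positivity) ((div_le_one (by positivity)).2 (by linarith))
  have hk_ratio : k * s ^ 2 / (a + s) ^ 2 - 1 ≤ k := by
    rw [mul_div_assoc]
    nlinarith [mul_le_mul_of_nonneg_left hratio hk]
  exact exp_le_exp.2 (mul_le_mul_of_nonneg_right (by linarith) hc)

theorem proportionality_factor_tendsto_one_general
    (ν σ T αl α : ℝ) (hT : 0 < T)
    (hα : 0 < α)
    (μ : ℝ → ℝ)
    (hμ : ∀ s : ℝ, 0 < s → 0 < μ s ∧
      μ s = Real.exp (((α / αl - 1) ^ 2 * s ^ 2 / (α * σ ^ 2 * μ s + s) ^ 2 - 1)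
        * ν ^ 2 * T / (2 * σ ^ 2))) :
    Filter.Tendsto (fun s : ℝ => (αl * σ ^ 2 * μ s + s) / (α * σ ^ 2 * μ s + s))
      Filter.atTop (nhds 1) := by
  have hμ_le : ∀ s, 0 < s → ‖μ s‖ ≤ rexp ((α / αl - 1) ^ 2 * (ν ^ 2 * T / (2 * σ ^ 2))) := by
    intro s hs
    obtain ⟨hpos, hfix⟩ := hμ s hs
    rw [norm_of_nonneg hpos.le, hfix, mul_assoc _ (ν ^ 2), mul_div_assoc]
    exact exp_mul_sq_div_sq_sub_one_le (sq_nonneg _) (by positivity) (by positivity) hs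
  exact tendsto_mul_add_div_mul_add_atTop _ _
    (isBoundedUnder_of_eventually_le ((eventually_gt_atTop 0).mono hμ_le))

/-- The follower's decision converges to the leader's as herding grows. -/
theorem proportionality_factor_tendsto_one
    (ν σ T αl α : ℝ) (hν : 0 < ν) (hσ : 0 < σ) (hT : 0 < T)
    (hαl : 0 < αl) (hα : 0 < α)
    (μ : ℝ → ℝ)
    (hμ : ∀ s : ℝ, 0 < s → 0 < μ s ∧
      μ s = Real.exp (((α / αl - 1) ^ 2 * s ^ 2 / (α * σ ^ 2 * μ s + s) ^ 2 - 1)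
        * ν ^ 2 * T / (2 * σ ^ 2))) :
    Filter.Tendsto (fun s : ℝ => (αl * σ ^ 2 * μ s + s) / (α * σ ^ 2 * μ s + s))
      Filter.atTop (nhds 1) :=
  proportionality_factor_tendsto_one_general ν σ T αl α hT hα μ hμ
end
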